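/- The Smart Reverse Rejecting (SRR) rule is weakly non-bossy: if agent i's priority for the preferential categories decreases from instance I to instance I' (the priorities of c_u^1 and c_u^2 remain equal to the baseline ordering ≻_π, which is the same in both instances), and i is unmatched under the SRR rule at I, then every agent j with i ≻_π j is matched under the SRR rule at I if and only if j is matched under the SRR rule at I'. -/

import Mathlib

open scoped Classical

/-- An instance of the rationing problem: a quota for every category and, for every
category `c`, a priority ranking `≿_c`: a total preorder on `N ∪ {∅}`, where we model
`N ∪ {∅}` as `Option N` with `none` playing the role of `∅`. -/
structure Inst (N C : Type*) where
  quota : C → ℕ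
  prio : C → Option N → Option N → Prop
  total : ∀ c x y, prio c x y ∨ prio c y x
  trans : ∀ c x y z, prio c x y → prio c y z → prio c x z

namespace Inst

variable {N C : Type*}

/-- The strict part `≻_c` of the priority ranking `≿_c`. -/
def Strict (I : Inst N C) (c : C) (x y : Option N) : Prop :=
  I.prio c x y ∧ ¬ I.prio c y x

/-- Agent `i` is eligible for category `c` if `i ≻_c ∅`. -/
def Eligible (I : Inst N C) (i : N) (c : C) : Prop :=
  I.Strict c (some i) none

end Inst

variable {N C : Type*} [Fintype N] [DecidableEq N] [DecidableEq C]

/-- The number of matched agents of (the function) `μ`. -/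
def msize (μ : N → Option C) : ℕ :=
  (Finset.univ.filter fun i => μ i ≠ none).card

/-- `μ` satisfies the capacity constraints: every category `c` is matched
to at most `quota c` agents. -/
def Inst.IsMatching (I : Inst N C) (μ : N → Option C) : Prop :=
  ∀ c, (Finset.univ.filter fun i => μ i = some c).card ≤ I.quota c

/-- A baseline ordering `≻_π`, given as a duplicate-free list of all agents,
listed from highest priority to lowest priority; so `i ≻_π j` iff
`order.indexOf i < order.indexOf j`. -/
def IsBaseline (order : List N) : Prop :=
  order.Nodup ∧ ∀ i : N, i ∈ order

/-- Agent `i`'s priority decreases from instance `I` to instance `I'`: quotas are unchanged,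
the rankings restricted to `(N ∪ {∅}) \ {i}` are unchanged, and `i` only moves down:
for all `x ≠ i`, `x ≿_c i` implies `x ≿'_c i` and `x ≻_c i` implies `x ≻'_c i`. -/
def PrioDecreases (I I' : Inst N C) (i : N) : Prop :=
  I.quota = I'.quota ∧
  (∀ (c : C) (x y : Option N), x ≠ some i → y ≠ some i → (I.prio c x y ↔ I'.prio c x y)) ∧
  (∀ (c : C) (x : Option N), x ≠ some i → I.prio c x (some i) → I'.prio c x (some i)) ∧
  (∀ (c : C) (x : Option N), x ≠ some i → I.Strict c x (some i) → I'.Strict c x (some i))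

/-- `μ` complies with the eligibility requirements. -/
def Complies (I : Inst N C) (μ : N → Option C) : Prop :=
  ∀ (i : N) (c : C), μ i = some c → I.Eligible i c

/-- The number of agents matched to a preferential category, i.e. a category other than the
unreserved subcategories `cu1` and `cu2`. -/
def beneCount2 (cu1 cu2 : C) (μ : N → Option C) : ℕ :=
  (Finset.univ.filter fun i => μ i ≠ none ∧ μ i ≠ some cu1 ∧ μ i ≠ some cu2).card

/-- `μ` is a matching of the reservation graph of the instance restricted to the
preferential categories that leaves all agents of `S` unmatched. -/
def PMatch (I : Inst N C) (cu1 cu2 : C) (S : Finset N) (μ : N → Option C) : Prop :=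
  I.IsMatching μ ∧ (∀ i ∈ S, μ i = none) ∧
    ∀ (i : N) (c : C), μ i = some c → c ≠ cu1 ∧ c ≠ cu2 ∧ I.Eligible i c

/-- The maximum number of agents of `N \ S` that can simultaneously be matched to
preferential categories. -/
noncomputable def msAvoid (I : Inst N C) (cu1 cu2 : C) (S : Finset N) : ℕ :=
  sSup {k | ∃ μ : N → Option C, PMatch I cu1 cu2 S μ ∧ msize μ = k}

/-- The set `N_1` of agents receiving an unreserved unit of `c_u^1` under the SRR rule:
considering the agents in order of the baseline ordering from highest to lowest priority,
agent `i` is added to `N_1` if `|N_1| < q_{c_u^1}` and the agents in `N \ (N_1 ∪ {i})` can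
still be matched to the preferential categories so as to form a maximum beneficiary
assignment. -/
noncomputable def srrN1 (I : Inst N C) (cu1 cu2 : C) (order : List N) : Finset N :=
  order.foldl
    (fun N1 i =>
      if N1.card < I.quota cu1 ∧
          msAvoid I cu1 cu2 (insert i N1) = msAvoid I cu1 cu2 (∅ : Finset N) then
        insert i N1
      else N1) ∅

/-- `μ` is a matching of the reduced reservation graph (restricted to the preferential
categories) in which the agents of `N1` are removed and, additionally, all edges `{j,c}`
such that some rejected agent `i ∈ R` has `i ≻_c j` are removed. -/
def PMatchR (I : Inst N C) (cu1 cu2 : C) (N1 R : Finset N) (μ : N → Option C) : Prop :=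
  PMatch I cu1 cu2 (N1 ∪ R) μ ∧
    ∀ (i : N) (c : C), μ i = some c → ∀ j ∈ R, ¬ I.Strict c (some j) (some i)

/-- The size of a maximum size matching of the reduced reservation graph (restricted to the
preferential categories, without the agents of `N1`, with rejected set `R`). -/
noncomputable def msR (I : Inst N C) (cu1 cu2 : C) (N1 R : Finset N) : ℕ :=
  sSup {k | ∃ μ : N → Option C, PMatchR I cu1 cu2 N1 R μ ∧ msize μ = k}

/-- The rejected set of the RR rule run on the agents outside `N1` with the preferential
categories, processing the agents from lowest to highest baseline priority. -/
noncomputable def srrRej (I : Inst N C) (cu1 cu2 : C) (order : List N) (N1 : Finset N) :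
    Finset N :=
  (order.filter fun i => decide (i ∉ N1)).foldr
    (fun i R =>
      if msR I cu1 cu2 N1 (insert i R) = msR I cu1 cu2 N1 (∅ : Finset N) then insert i R
      else R) ∅

/-- The final matching of the SRR rule, given the set `N1` of agents matched to `c_u^1` and
the matching `μP` of the remaining agents to the preferential categories: the agents left
unmatched receive the `q_{c_u^2}` units of `c_u^2` in order of the baseline ordering from
highest to lowest priority. -/
noncomputable def srrFinal (I : Inst N C) (cu1 cu2 : C) (order : List N) (N1 : Finset N)
    (μP : N → Option C) : N → Option C := fun i =>
  if i ∈ N1 then some cu1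
  else
    match μP i with
    | some c => some c
    | none =>
      if (Finset.univ.filter fun j =>
            j ∉ N1 ∧ μP j = none ∧ order.idxOf j < order.idxOf i).card <
          I.quota cu2 then
        some cu2
      else none

/-- `μ` is a possible output of the Smart Reverse Rejecting (SRR) rule. -/
def IsSRROutcome (I : Inst N C) (cu1 cu2 : C) (order : List N) (μ : N → Option C) : Prop :=
  ∃ μP : N → Option C,
    PMatchR I cu1 cu2 (srrN1 I cu1 cu2 order) (srrRej I cu1 cu2 order (srrN1 I cu1 cu2 order))
      μP ∧
    msize μP =
      msR I cu1 cu2 (srrN1 I cu1 cu2 order) (srrRej I cu1 cu2 order (srrN1 I cu1 cu2 order)) ∧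
    μ = srrFinal I cu1 cu2 order (srrN1 I cu1 cu2 order) μP

/-!
Since `i` is unserved at `I`, the RR rule rejects it. A maximum matching of the final reduced
graph at `I` leaves `i` unmatched and matches nobody whom `i` outranks, so it stays feasible at
`I'`; since lowering `i`'s priority can only shrink the feasible sets of matchings that do not
reject `i`, every maximum size the SRR rule compares is the same at `I` and `I'`. Hence `N_1` is
unchanged, and the RR rule, which processes the agents from the bottom of the baseline ordering
up, makes the same decisions on `i` and on every agent below `i`. In both instances the RR rule
serves exactly the non-rejected agents, so the two rejected sets have the same size and hence the
same number of members above `i`; at `I` these already use up `c_u^2`, so no agent below `i`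
receives a unit of `c_u^2` in either instance.
-/

open Finset

section Matchings

variable {I : Inst N C} {cu1 cu2 : C} {N1 R : Finset N} {μ : N → Option C}

lemma pMatchR_none (I : Inst N C) (cu1 cu2 : C) (N1 R : Finset N) :
    PMatchR I cu1 cu2 N1 R (fun _ => none) := by
  simp [PMatchR, PMatch, Inst.IsMatching]

lemma msR_bddAbove (I : Inst N C) (cu1 cu2 : C) (N1 R : Finset N) :
    BddAbove {k | ∃ μ : N → Option C, PMatchR I cu1 cu2 N1 R μ ∧ msize μ = k} :=
  ⟨Fintype.card N, fun _ ⟨_, _, hk⟩ => hk ▸ card_filter_le _ _⟩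

lemma exists_pMatchR_msize_eq_msR (I : Inst N C) (cu1 cu2 : C) (N1 R : Finset N) :
    ∃ μ, PMatchR I cu1 cu2 N1 R μ ∧ msize μ = msR I cu1 cu2 N1 R :=
  Nat.sSup_mem (s := {k | ∃ μ, PMatchR I cu1 cu2 N1 R μ ∧ msize μ = k})
    ⟨_, _, pMatchR_none I cu1 cu2 N1 R, rfl⟩ (msR_bddAbove I cu1 cu2 N1 R)

lemma PMatchR.msize_le_msR (h : PMatchR I cu1 cu2 N1 R μ) : msize μ ≤ msR I cu1 cu2 N1 R :=
  le_csSup (msR_bddAbove I cu1 cu2 N1 R) ⟨μ, h, rfl⟩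

lemma msR_le_msR_of_imp {I' : Inst N C} {N1' R' : Finset N}
    (h : ∀ μ, PMatchR I cu1 cu2 N1 R μ → PMatchR I' cu1 cu2 N1' R' μ) :
    msR I cu1 cu2 N1 R ≤ msR I' cu1 cu2 N1' R' := by
  obtain ⟨μ, hμ, hsize⟩ := exists_pMatchR_msize_eq_msR I cu1 cu2 N1 R
  exact hsize ▸ (h μ hμ).msize_le_msR

lemma PMatchR.mono {N1' R' : Finset N} (hN : N1' ⊆ N1) (hR : R' ⊆ R)
    (h : PMatchR I cu1 cu2 N1 R μ) : PMatchR I cu1 cu2 N1' R' μ :=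
  ⟨⟨h.1.1, fun j hj => h.1.2.1 j (union_subset_union hN hR hj), h.1.2.2⟩,
    fun j c hj k hk => h.2 j c hj k (hR hk)⟩

lemma msR_anti {N1' R' : Finset N} (hN : N1' ⊆ N1) (hR : R' ⊆ R) :
    msR I cu1 cu2 N1 R ≤ msR I cu1 cu2 N1' R' :=
  msR_le_msR_of_imp fun _ => PMatchR.mono hN hR

lemma msAvoid_eq_msR (I : Inst N C) (cu1 cu2 : C) (S : Finset N) :
    msAvoid I cu1 cu2 S = msR I cu1 cu2 S ∅ := by
  have h : ∀ μ, PMatchR I cu1 cu2 S ∅ μ ↔ PMatch I cu1 cu2 S μ := fun μ =>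
    ⟨fun h => by simpa using h.1, fun h => ⟨by simpa using h, by simp⟩⟩
  simp only [msAvoid, msR, h]

lemma msize_add_card_eq (hμ : PMatchR I cu1 cu2 N1 R μ)
    (hmatched : ∀ k, k ∉ N1 → k ∉ R → μ k ≠ none) :
    msize μ + #(N1 ∪ R) = Fintype.card N := by
  have h : univ.filter (fun x => μ x ≠ none) = (N1 ∪ R)ᶜ := by
    ext x
    simp only [mem_filter, mem_univ, true_and, mem_compl, mem_union, not_or]
    exact ⟨fun hx => ⟨fun h => hx (hμ.1.2.1 x (mem_union_left _ h)),
      fun h => hx (hμ.1.2.1 x (mem_union_right _ h))⟩, fun ⟨h1, h2⟩ => hmatched x h1 h2⟩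
  rw [msize, h, card_compl, Nat.sub_add_cancel (card_le_univ _)]

end Matchings

section Priorities

variable {α β : Type*}

namespace Inst

variable {I : Inst α β} {c : β} {x y z : Option α}

lemma Strict.trans (h1 : I.Strict c x y) (h2 : I.Strict c y z) : I.Strict c x z :=
  ⟨I.trans c x y z h1.1 h2.1, fun h => h1.2 (I.trans c y z x h2.1 h)⟩

lemma Strict.irrefl : ¬ I.Strict c x x := fun h => h.2 h.1

lemma prio_of_not_strict (h : ¬ I.Strict c x y) : I.prio c y x :=
  (I.total c x y).elim (fun hxy => by_contra fun hyx => h ⟨hxy, hyx⟩) id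

end Inst

namespace PrioDecreases

variable {I I' : Inst α β} {i : α} {c : β}

lemma strict_iff (hdec : PrioDecreases I I' i) {x y : Option α} (hx : x ≠ some i)
    (hy : y ≠ some i) : I.Strict c x y ↔ I'.Strict c x y := by
  rw [Inst.Strict, Inst.Strict, hdec.2.1 c x y hx hy, hdec.2.1 c y x hy hx]

lemma eligible_of_eligible' (hdec : PrioDecreases I I' i) {j : α} (h : I'.Eligible j c) :
    I.Eligible j c := by
  by_cases hj : j = i
  · subst hj
    exact by_contra fun hne => h.2 (hdec.2.2.1 c none (by simp) (Inst.prio_of_not_strict hne))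
  · exact (hdec.strict_iff (by simpa using hj) (by simp)).2 h

lemma strict_of_strict' (hdec : PrioDecreases I I' i) {y : Option α} (hy : y ≠ some i)
    (h : I'.Strict c (some i) y) : I.Strict c (some i) y :=
  by_contra fun hne => h.2 (hdec.2.2.1 c y hy (Inst.prio_of_not_strict hne))

end PrioDecreases

end Priorities

namespace PrioDecreases

variable {I I' : Inst N C} {i : N} {cu1 cu2 : C} {N1 R : Finset N} {μ : N → Option C}

lemma pMatchR_of_pMatchR' (hdec : PrioDecreases I I' i) (hiR : i ∉ R)
    (h : PMatchR I' cu1 cu2 N1 R μ) : PMatchR I cu1 cu2 N1 R μ := by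
  refine ⟨⟨fun c => hdec.1 ▸ h.1.1 c, h.1.2.1, fun m c hm => ?_⟩, fun m c hm j hj hjm => ?_⟩
  · obtain ⟨h1, h2, h3⟩ := h.1.2.2 m c hm
    exact ⟨h1, h2, hdec.eligible_of_eligible' h3⟩
  · have hji : some j ≠ some i := by simpa using ne_of_mem_of_not_mem hj hiR
    by_cases hmi : m = i
    · subst hmi
      exact h.2 m c hm j hj (hdec.2.2.2 c (some j) hji hjm)
    · exact h.2 m c hm j hj ((hdec.strict_iff hji (by simpa using hmi)).1 hjm)

/-- A rejected agent `i` is unmatched and blocks nobody, so lowering its priority keeps the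
matching feasible. -/
lemma pMatchR'_of_pMatchR (hdec : PrioDecreases I I' i) (hiR : i ∈ R)
    (h : PMatchR I cu1 cu2 N1 R μ) : PMatchR I' cu1 cu2 N1 R μ := by
  have hmi : ∀ m c, μ m = some c → some m ≠ some i := fun m c hm hmi => by
    rw [Option.some_inj.1 hmi, h.1.2.1 i (mem_union_right _ hiR)] at hm
    cases hm
  refine ⟨⟨fun c => hdec.1 ▸ h.1.1 c, h.1.2.1, fun m c hm => ?_⟩, fun m c hm j hj hjm => ?_⟩
  · obtain ⟨h1, h2, h3⟩ := h.1.2.2 m c hm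
    exact ⟨h1, h2, (hdec.strict_iff (hmi m c hm) (by simp)).1 h3⟩
  · by_cases hji : j = i
    · subst hji
      exact h.2 m c hm j hiR (hdec.strict_of_strict' (hmi m c hm) hjm)
    · exact h.2 m c hm j hj ((hdec.strict_iff (by simpa using hji) (hmi m c hm)).2 hjm)

lemma msR_le (hdec : PrioDecreases I I' i) (hiR : i ∉ R) :
    msR I' cu1 cu2 N1 R ≤ msR I cu1 cu2 N1 R :=
  msR_le_msR_of_imp fun _ => hdec.pMatchR_of_pMatchR' hiR

lemma msR_le_msR' (hdec : PrioDecreases I I' i) (hiR : i ∈ R) {A B : Finset N}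
    (hA : A ⊆ N1) (hB : B ⊆ R) : msR I cu1 cu2 N1 R ≤ msR I' cu1 cu2 A B :=
  msR_le_msR_of_imp fun _ h => (hdec.pMatchR'_of_pMatchR hiR h).mono hA hB

end PrioDecreases

section Maximal

noncomputable def Inst.rank {α β : Type*} [Fintype α] (J : Inst α β) (c : β) (x : α) : ℕ :=
  #(univ.filter fun y : Option α => J.Strict c y (some x))

lemma Inst.rank_lt_rank {α β : Type*} [Fintype α] {J : Inst α β} {c : β} {k m : α}
    (h : J.Strict c (some k) (some m)) : J.rank c k < J.rank c m :=
  card_lt_card <| (ssubset_iff_of_subset fun _ hy =>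
      mem_filter.2 ⟨mem_univ _, (mem_filter.1 hy).2.trans h⟩).2
    ⟨some k, mem_filter.2 ⟨mem_univ _, h⟩, fun hk => Inst.Strict.irrefl (mem_filter.1 hk).2⟩

lemma card_filter_comp_equiv {α β : Type*} [Fintype α] (σ : α ≃ α) (μ : α → β) (p : β → Prop)
    [DecidablePred p] :
    #(univ.filter fun x => p (μ (σ x))) = #(univ.filter fun x => p (μ x)) :=
  card_equiv σ (by simp)

lemma msize_comp_equiv {α β : Type*} [Fintype α] (σ : α ≃ α) (μ : α → Option β) :
    msize (μ ∘ σ) = msize μ :=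
  card_filter_comp_equiv σ μ (· ≠ none)

noncomputable def potential {α β : Type*} [Fintype α] (J : Inst α β) (μ : α → Option β) : ℕ :=
  ∑ x, (μ x).elim 0 (J.rank · x)

lemma potential_comp_swap_lt {α β : Type*} [Fintype α] [DecidableEq α] {J : Inst α β}
    {μ : α → Option β} {k m : α} {c : β} (hkn : μ k = none) (hm : μ m = some c)
    (hkm : J.Strict c (some k) (some m)) : potential J (μ ∘ Equiv.swap k m) < potential J μ := by
  have hmk : m ≠ k := fun h => by rw [h, hkn] at hm; cases hm
  have hsplit : ∀ f : α → ℕ, ∑ x, f x = f k + f m + ∑ x ∈ univ \ {k, m}, f x := fun f => by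
    rw [← sum_sdiff (subset_univ {k, m}), sum_pair hmk.symm, add_comm]
  have hrest : ∑ x ∈ univ \ {k, m}, ((μ ∘ Equiv.swap k m) x).elim 0 (J.rank · x) =
      ∑ x ∈ univ \ {k, m}, (μ x).elim 0 (J.rank · x) := by
    refine sum_congr rfl fun x hx => ?_
    simp only [mem_sdiff, mem_univ, mem_insert, mem_singleton, true_and, not_or] at hx
    simp [Equiv.swap_apply_of_ne_of_ne hx.1 hx.2]
  rw [potential, potential, hsplit, hsplit (fun x => (μ x).elim 0 (J.rank · x)), hrest]
  simpa [hkn, hm] using J.rank_lt_rank hkm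

variable {J : Inst N C} {cu1 cu2 : C} {N1 R : Finset N} {μ : N → Option C}

/-- `μ ∘ Equiv.swap k m` hands `m`'s unit of `c` to `k`. -/
lemma PMatchR.comp_swap (hμ : PMatchR J cu1 cu2 N1 R μ) {k m : N} {c : C}
    (hk : k ∉ N1 ∪ R) (hkn : μ k = none) (hm : μ m = some c)
    (hkm : J.Strict c (some k) (some m)) : PMatchR J cu1 cu2 N1 R (μ ∘ Equiv.swap k m) := by
  have hmk : m ≠ k := fun h => by rw [h, hkn] at hm; cases hm
  have hmNR : m ∉ N1 ∪ R := fun h => by rw [hμ.1.2.1 m h] at hm; cases hm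
  have hcases : ∀ x c', (μ ∘ Equiv.swap k m) x = some c' → (x = k ∧ c' = c) ∨ μ x = some c' := by
    intro x c' hx
    rcases eq_or_ne x k with rfl | hxk
    · simp only [Function.comp_apply, Equiv.swap_apply_left, hm, Option.some_inj] at hx
      exact Or.inl ⟨rfl, hx.symm⟩
    rcases eq_or_ne x m with rfl | hxm
    · simp [hkn] at hx
    · exact Or.inr (by simpa [Equiv.swap_apply_of_ne_of_ne hxk hxm] using hx)
  refine ⟨⟨fun c' => ?_, fun x hx => ?_, fun x c' hx => ?_⟩, fun x c' hx j hj => ?_⟩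
  · exact (card_filter_comp_equiv _ μ (· = some c')).trans_le (hμ.1.1 c')
  · have hxk : x ≠ k := ne_of_mem_of_not_mem hx hk
    have hxm : x ≠ m := ne_of_mem_of_not_mem hx hmNR
    simpa [Equiv.swap_apply_of_ne_of_ne hxk hxm] using hμ.1.2.1 x hx
  · rcases hcases x c' hx with ⟨rfl, rfl⟩ | hx
    · obtain ⟨h1, h2, h3⟩ := hμ.1.2.2 m c' hm
      exact ⟨h1, h2, hkm.trans h3⟩
    · exact hμ.1.2.2 x c' hx
  · rcases hcases x c' hx with ⟨rfl, rfl⟩ | hx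
    · exact fun hjx => hμ.2 m c' hm j hj (hjx.trans hkm)
    · exact hμ.2 x c' hx j hj

lemma PMatchR.reject (hμ : PMatchR J cu1 cu2 N1 R μ) {k : N} (hkn : μ k = none)
    (hno : ∀ m c, μ m = some c → ¬ J.Strict c (some k) (some m)) :
    PMatchR J cu1 cu2 N1 (insert k R) μ := by
  refine ⟨⟨hμ.1.1, fun x hx => ?_, hμ.1.2.2⟩, fun x c hx j hj => ?_⟩
  · rcases mem_union.1 hx with hx | hx
    · exact hμ.1.2.1 x (mem_union_left _ hx)
    · rcases mem_insert.1 hx with rfl | hx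
      · exact hkn
      · exact hμ.1.2.1 x (mem_union_right _ hx)
  · rcases mem_insert.1 hj with rfl | hj
    · exact hno x c hx
    · exact hμ.2 x c hx j hj

/-- If `k` were unserved, rejecting it would keep `μ` feasible unless `k` outranks some matched
`m`; swapping `k` and `m` then lowers the potential while leaving `m` unserved. -/
theorem PMatchR.ne_none_of_msR_insert_lt
    (hlt : ∀ k, k ∉ N1 → k ∉ R → msR J cu1 cu2 N1 (insert k R) < msR J cu1 cu2 N1 R)
    (hμ : PMatchR J cu1 cu2 N1 R μ) (hmax : msR J cu1 cu2 N1 R ≤ msize μ) {k : N}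
    (hk1 : k ∉ N1) (hk2 : k ∉ R) : μ k ≠ none := by
  induction hp : potential J μ using Nat.strong_induction_on generalizing μ k with
  | _ p ih =>
  intro hkn
  obtain ⟨m, c, hm, hkm⟩ : ∃ m c, μ m = some c ∧ J.Strict c (some k) (some m) := by
    by_contra! hno
    exact (hlt k hk1 hk2).not_ge (hmax.trans (hμ.reject hkn hno).msize_le_msR)
  have hmk : m ≠ k := fun h => by rw [h, hkn] at hm; cases hm
  have hmNR : m ∉ N1 ∪ R := fun h => by rw [hμ.1.2.1 m h] at hm; cases hm
  refine ih _ (hp ▸ potential_comp_swap_lt hkn hm hkm)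
    (hμ.comp_swap (by simp [hk1, hk2]) hkn hm hkm) (by rwa [msize_comp_equiv])
    (fun h => hmNR (mem_union_left _ h)) (fun h => hmNR (mem_union_right _ h)) rfl ?_
  simp [hkn]

end Maximal

section Folds

variable {α : Type*}

lemma subset_foldl {f : Finset α → α → Finset α} (hf : ∀ s a, s ⊆ f s a) (l : List α)
    (s : Finset α) : s ⊆ l.foldl f s :=
  l.foldlRecOn f (motive := (s ⊆ ·)) subset_rfl fun b hb a _ => hb.trans (hf b a)

lemma subset_foldr {f : α → Finset α → Finset α} (hf : ∀ a r, r ⊆ f a r) (l : List α)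
    (r : Finset α) : r ⊆ l.foldr f r :=
  l.foldrRecOn f (motive := (r ⊆ ·)) subset_rfl fun b hb a _ => hb.trans (hf a b)

lemma mem_foldr_iff_of_notMem [DecidableEq α] {f : α → Finset α → Finset α}
    (hf : ∀ a r, r ⊆ f a r) (hf' : ∀ a r, f a r ⊆ insert a r) {l : List α} {x : α}
    (hx : x ∉ l) (r : Finset α) : x ∈ l.foldr f r ↔ x ∈ r :=
  ⟨l.foldrRecOn f (motive := fun b => x ∈ b → x ∈ r) id fun b hb a ha hxa =>
      hb ((Finset.mem_insert.1 (hf' a b hxa)).resolve_left fun h => hx (h ▸ ha)),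
    fun h => subset_foldr hf l r h⟩

lemma foldl_eq_foldl_of_subset {f g : Finset α → α → Finset α} (hf : ∀ s a, s ⊆ f s a)
    (l : List α) (s : Finset α) (hfg : ∀ t a, f t a ⊆ l.foldl f s → g t a = f t a) :
    l.foldl g s = l.foldl f s := by
  induction l generalizing s with
  | nil => rfl
  | cons a t ih =>
    rw [List.foldl_cons, List.foldl_cons, hfg s a (subset_foldl hf t _)]
    exact ih _ hfg

lemma foldr_eq_foldr_of_subset {f g : α → Finset α → Finset α} (hf : ∀ a r, r ⊆ f a r)
    (l : List α) (r : Finset α) (hfg : ∀ a r', f a r' ⊆ l.foldr f r → g a r' = f a r') :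
    l.foldr g r = l.foldr f r := by
  induction l with
  | nil => rfl
  | cons a t ih =>
    rw [List.foldr_cons, List.foldr_cons, ih fun b r' h => hfg b r' (h.trans (hf a _)),
      hfg a _ subset_rfl]

end Folds

section Steps

variable (I : Inst N C) (cu1 cu2 : C) {order : List N} {N1 : Finset N}

noncomputable def n1Step (N1 : Finset N) (a : N) : Finset N :=
  if N1.card < I.quota cu1 ∧ msAvoid I cu1 cu2 (insert a N1) = msAvoid I cu1 cu2 ∅ then
    insert a N1
  else N1

noncomputable def rejStep (N1 : Finset N) (a : N) (R : Finset N) : Finset N :=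
  if msR I cu1 cu2 N1 (insert a R) = msR I cu1 cu2 N1 ∅ then insert a R else R

lemma srrRej_eq_foldr (order : List N) (N1 : Finset N) :
    srrRej I cu1 cu2 order N1 =
      (order.filter fun i => decide (i ∉ N1)).foldr (rejStep I cu1 cu2 N1) ∅ := rfl

lemma subset_n1Step (s : Finset N) (a : N) : s ⊆ n1Step I cu1 cu2 s a := by
  unfold n1Step; split_ifs
  exacts [subset_insert a s, subset_rfl]

lemma subset_rejStep (N1 : Finset N) (a : N) (r : Finset N) : r ⊆ rejStep I cu1 cu2 N1 a r := by
  unfold rejStep; split_ifs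
  exacts [subset_insert a r, subset_rfl]

lemma rejStep_subset_insert (N1 : Finset N) (a : N) (r : Finset N) :
    rejStep I cu1 cu2 N1 a r ⊆ insert a r := by
  unfold rejStep; split_ifs
  exacts [subset_rfl, subset_insert a r]

lemma msAvoid_srrN1 (order : List N) :
    msAvoid I cu1 cu2 (srrN1 I cu1 cu2 order) = msAvoid I cu1 cu2 ∅ :=
  order.foldlRecOn _ (motive := fun s => msAvoid I cu1 cu2 s = msAvoid I cu1 cu2 ∅) rfl
    fun s hs a _ => by split_ifs with h; exacts [h.2, hs]

lemma msR_srrRej (order : List N) (N1 : Finset N) :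
    msR I cu1 cu2 N1 (srrRej I cu1 cu2 order N1) = msR I cu1 cu2 N1 ∅ :=
  List.foldrRecOn _ _ (motive := fun r => msR I cu1 cu2 N1 r = msR I cu1 cu2 N1 ∅) rfl
    fun r hr a _ => by split_ifs with h; exacts [h, hr]

lemma mem_of_mem_srrRej {x : N} (hx : x ∈ srrRej I cu1 cu2 order N1) : x ∈ order ∧ x ∉ N1 := by
  by_contra hxl
  rw [srrRej_eq_foldr, mem_foldr_iff_of_notMem (subset_rejStep I cu1 cu2 N1)
    (rejStep_subset_insert I cu1 cu2 N1) (by simpa using hxl)] at hx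
  simp at hx

lemma disjoint_srrRej : Disjoint N1 (srrRej I cu1 cu2 order N1) :=
  disjoint_right.2 fun _ hx => (mem_of_mem_srrRej I cu1 cu2 hx).2

lemma msR_insert_foldr_rejStep_lt {l : List N} (r : Finset N) {k : N} (hk : k ∈ l)
    (hkr : k ∉ l.foldr (rejStep I cu1 cu2 N1) r) :
    msR I cu1 cu2 N1 (insert k (l.foldr (rejStep I cu1 cu2 N1) r)) < msR I cu1 cu2 N1 ∅ := by
  induction l with
  | nil => simp at hk
  | cons a t ih =>
    set F := t.foldr (rejStep I cu1 cu2 N1) r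
    have hF : F ⊆ rejStep I cu1 cu2 N1 a F := subset_rejStep I cu1 cu2 N1 a F
    rw [List.foldr_cons] at hkr ⊢
    rcases eq_or_ne k a with rfl | hka
    · unfold rejStep at hkr ⊢
      split_ifs at hkr ⊢ with h
      · exact absurd (mem_insert_self k F) hkr
      · exact (msR_anti subset_rfl (empty_subset _)).lt_of_ne h
    · have hkt : k ∈ t := (List.mem_cons.1 hk).resolve_left hka
      exact (msR_anti subset_rfl (insert_subset_insert k hF)).trans_lt
        (ih hkt fun h => hkr (hF h))

lemma msR_insert_srrRej_lt (hall : ∀ k, k ∈ order) {k : N} (hk1 : k ∉ N1)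
    (hk2 : k ∉ srrRej I cu1 cu2 order N1) :
    msR I cu1 cu2 N1 (insert k (srrRej I cu1 cu2 order N1)) <
      msR I cu1 cu2 N1 (srrRej I cu1 cu2 order N1) := by
  rw [msR_srrRej]
  exact msR_insert_foldr_rejStep_lt I cu1 cu2 ∅ (List.mem_filter.2 ⟨hall k, by simpa⟩) hk2

lemma msR_add_card_srrRej (hall : ∀ k, k ∈ order) :
    msR I cu1 cu2 N1 ∅ + #N1 + #(srrRej I cu1 cu2 order N1) = Fintype.card N := by
  obtain ⟨μ, hμ, hsize⟩ := exists_pMatchR_msize_eq_msR I cu1 cu2 N1 (srrRej I cu1 cu2 order N1)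
  rw [← msR_srrRej I cu1 cu2 order, ← hsize, add_assoc,
    ← card_union_of_disjoint (disjoint_srrRej I cu1 cu2)]
  exact msize_add_card_eq hμ fun k hk1 hk2 => hμ.ne_none_of_msR_insert_lt
    (fun _ h1 h2 => msR_insert_srrRej_lt I cu1 cu2 hall h1 h2) hsize.ge hk1 hk2

end Steps

lemma IsSRROutcome.ne_none_iff {I : Inst N C} {cu1 cu2 : C} {order : List N}
    {μ : N → Option C} (hall : ∀ k, k ∈ order) (hout : IsSRROutcome I cu1 cu2 order μ) (j : N) :
    μ j ≠ none ↔ j ∈ srrN1 I cu1 cu2 order ∨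
      j ∉ srrRej I cu1 cu2 order (srrN1 I cu1 cu2 order) ∨
      #((srrRej I cu1 cu2 order (srrN1 I cu1 cu2 order)).filter
        fun x => order.idxOf x < order.idxOf j) < I.quota cu2 := by
  obtain ⟨μP, hμP, hsize, rfl⟩ := hout
  set N1 := srrN1 I cu1 cu2 order
  set Rf := srrRej I cu1 cu2 order N1
  have hmatched : ∀ k, μP k ≠ none ↔ k ∉ N1 ∧ k ∉ Rf := fun k =>
    ⟨fun hk => ⟨fun h => hk (hμP.1.2.1 k (mem_union_left _ h)),
        fun h => hk (hμP.1.2.1 k (mem_union_right _ h))⟩,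
      fun ⟨h1, h2⟩ => hμP.ne_none_of_msR_insert_lt
        (fun _ h1 h2 => msR_insert_srrRej_lt I cu1 cu2 hall h1 h2) hsize.ge h1 h2⟩
  have hunserved : univ.filter (fun m => m ∉ N1 ∧ μP m = none ∧ order.idxOf m < order.idxOf j) =
      Rf.filter fun x => order.idxOf x < order.idxOf j := by
    ext x
    have h1 := hmatched x
    have h2 : x ∈ Rf → x ∉ N1 := fun hx => (mem_of_mem_srrRej I cu1 cu2 hx).2
    simp only [mem_filter, mem_univ, true_and]
    tauto
  by_cases hj : j ∈ N1
  · simp [srrFinal, hj]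
  cases hPj : μP j with
  | some c => simp [srrFinal, hj, hPj, ((hmatched j).1 (by simp [hPj])).2]
  | none =>
    have hjR : j ∈ Rf := by_contra fun h => (hmatched j).2 ⟨hj, h⟩ hPj
    simp only [srrFinal, hj, hPj, hunserved, hjR]
    split_ifs <;> simp_all

namespace PrioDecreases

variable {I I' : Inst N C} {i : N} {cu1 cu2 : C} {order : List N} {N1 R : Finset N}

lemma msR_empty_eq (hdec : PrioDecreases I I' i) (hR : msR I cu1 cu2 N1 R = msR I cu1 cu2 N1 ∅)
    (hiR : i ∈ R) : msR I' cu1 cu2 N1 ∅ = msR I cu1 cu2 N1 ∅ :=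
  le_antisymm (hdec.msR_le (notMem_empty i))
    (hR ▸ hdec.msR_le_msR' hiR subset_rfl (empty_subset _))

lemma msAvoid_eq (hdec : PrioDecreases I I' i)
    (hN1 : msAvoid I cu1 cu2 N1 = msAvoid I cu1 cu2 ∅)
    (hR : msR I cu1 cu2 N1 R = msR I cu1 cu2 N1 ∅) (hiR : i ∈ R) {A : Finset N} (hA : A ⊆ N1) :
    msAvoid I' cu1 cu2 A = msAvoid I cu1 cu2 ∅ := by
  simp only [msAvoid_eq_msR] at hN1 ⊢
  refine le_antisymm ((msR_anti (empty_subset A) subset_rfl).trans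
    (hdec.msR_le (notMem_empty i))) ?_
  rw [← hN1, ← hR]
  exact hdec.msR_le_msR' hiR hA (empty_subset _)

lemma n1Step_eq (hdec : PrioDecreases I I' i)
    (hN1 : msAvoid I cu1 cu2 N1 = msAvoid I cu1 cu2 ∅)
    (hR : msR I cu1 cu2 N1 R = msR I cu1 cu2 N1 ∅) (hiR : i ∈ R) {s : Finset N} {a : N}
    (h : n1Step I cu1 cu2 s a ⊆ N1) : n1Step I' cu1 cu2 s a = n1Step I cu1 cu2 s a := by
  have h0 := hdec.msAvoid_eq hN1 hR hiR (empty_subset N1)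
  unfold n1Step at h ⊢
  rw [← hdec.1]
  by_cases hcond : #s < I.quota cu1 ∧ msAvoid I cu1 cu2 (insert a s) = msAvoid I cu1 cu2 ∅
  · rw [if_pos hcond] at h ⊢
    rw [if_pos ⟨hcond.1, by rw [hdec.msAvoid_eq hN1 hR hiR h, h0]⟩]
  · rw [if_neg hcond, if_neg]
    rintro ⟨hcard, hms⟩
    have hle : msAvoid I' cu1 cu2 (insert a s) ≤ msAvoid I cu1 cu2 (insert a s) := by
      simp only [msAvoid_eq_msR]
      exact hdec.msR_le (notMem_empty i)
    have hanti : msAvoid I cu1 cu2 (insert a s) ≤ msAvoid I cu1 cu2 ∅ := by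
      simp only [msAvoid_eq_msR]
      exact msR_anti (empty_subset _) subset_rfl
    exact hcond ⟨hcard, by omega⟩

theorem srrN1_eq (hdec : PrioDecreases I I' i)
    (hi : i ∈ srrRej I cu1 cu2 order (srrN1 I cu1 cu2 order)) :
    srrN1 I' cu1 cu2 order = srrN1 I cu1 cu2 order :=
  foldl_eq_foldl_of_subset (subset_n1Step I cu1 cu2) order ∅ fun _ _ h =>
    hdec.n1Step_eq (msAvoid_srrN1 I cu1 cu2 order) (msR_srrRej I cu1 cu2 order _) hi h

lemma rejStep_eq (hdec : PrioDecreases I I' i) (hR : msR I cu1 cu2 N1 R = msR I cu1 cu2 N1 ∅)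
    (hiR : i ∈ R) {a : N} {r : Finset N} (hir : i ∉ r) (h : rejStep I cu1 cu2 N1 a r ⊆ R) :
    rejStep I' cu1 cu2 N1 a r = rejStep I cu1 cu2 N1 a r := by
  have hr : r ⊆ R := (subset_rejStep I cu1 cu2 N1 a r).trans h
  have h0 := hdec.msR_empty_eq hR hiR
  unfold rejStep at h ⊢
  by_cases hins : insert a r ⊆ R
  · have hI' : msR I' cu1 cu2 N1 (insert a r) = msR I' cu1 cu2 N1 ∅ :=
      le_antisymm (msR_anti subset_rfl (empty_subset _))
        (h0 ▸ hR ▸ hdec.msR_le_msR' hiR subset_rfl hins)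
    have hI : msR I cu1 cu2 N1 (insert a r) = msR I cu1 cu2 N1 ∅ :=
      le_antisymm (msR_anti subset_rfl (empty_subset _)) (hR ▸ msR_anti subset_rfl hins)
    rw [if_pos hI, if_pos hI']
  · have hI : msR I cu1 cu2 N1 (insert a r) ≠ msR I cu1 cu2 N1 ∅ := fun hc =>
      hins (by rwa [if_pos hc] at h)
    have hai : a ≠ i := fun hai => hins (insert_subset (hai ▸ hiR) hr)
    have hle : msR I' cu1 cu2 N1 (insert a r) ≤ msR I cu1 cu2 N1 (insert a r) :=
      hdec.msR_le (by simp [hai.symm, hir])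
    have hanti : msR I cu1 cu2 N1 (insert a r) ≤ msR I cu1 cu2 N1 ∅ :=
      msR_anti subset_rfl (empty_subset _)
    rw [if_neg hI, if_neg]
    omega

/-- The RR rule processes agents from the bottom of the baseline ordering up, and the two runs
make the same decisions until they reach `i`. -/
theorem mem_srrRej_iff (hdec : PrioDecreases I I' i) (hnd : order.Nodup)
    (hi : i ∈ srrRej I cu1 cu2 order N1) {x : N} (hx : order.idxOf i ≤ order.idxOf x) :
    x ∈ srrRej I' cu1 cu2 order N1 ↔ x ∈ srrRej I cu1 cu2 order N1 := by
  have hR := msR_srrRej I cu1 cu2 order N1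
  obtain ⟨hio, hiN1⟩ := mem_of_mem_srrRej I cu1 cu2 hi
  obtain ⟨o₁, o₂, rfl⟩ := List.append_of_mem hio
  obtain ⟨-, hnd₂, hdisj⟩ := List.nodup_append.1 hnd
  have hio₁ : i ∉ o₁ := fun h => hdisj i h i List.mem_cons_self rfl
  have hio₂ : i ∉ o₂ := (List.nodup_cons.1 hnd₂).1
  have hxo₁ : x ∉ o₁ := fun hxo => by
    rw [List.idxOf_append_of_notMem hio₁, List.idxOf_append_of_mem hxo, List.idxOf_cons_self]
      at hx
    exact absurd (List.idxOf_lt_length_of_mem hxo) (by omega)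
  set p : N → Bool := fun y => decide (y ∉ N1)
  have hsplit : (o₁ ++ i :: o₂).filter p = o₁.filter p ++ i :: o₂.filter p := by
    simp [p, List.filter_append, hiN1]
  set rI := (o₂.filter p).foldr (rejStep I cu1 cu2 N1) ∅
  have hRf : srrRej I cu1 cu2 (o₁ ++ i :: o₂) N1 =
      (o₁.filter p).foldr (rejStep I cu1 cu2 N1) (rejStep I cu1 cu2 N1 i rI) := by
    rw [srrRej_eq_foldr, hsplit, List.foldr_append, List.foldr_cons]
  have hirI : i ∉ rI := by
    rw [mem_foldr_iff_of_notMem (subset_rejStep I cu1 cu2 N1) (rejStep_subset_insert I cu1 cu2 N1)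
      (fun h => hio₂ (List.mem_filter.1 h).1)]
    exact notMem_empty i
  have hrIR : insert i rI ⊆ srrRej I cu1 cu2 (o₁ ++ i :: o₂) N1 :=
    insert_subset hi (hRf ▸ (subset_rejStep I cu1 cu2 N1 i rI).trans
      (subset_foldr (subset_rejStep I cu1 cu2 N1) _ _))
  have hlow : (o₂.filter p).foldr (rejStep I' cu1 cu2 N1) ∅ = rI :=
    foldr_eq_foldr_of_subset (subset_rejStep I cu1 cu2 N1) _ _ fun a r h =>
      hdec.rejStep_eq hR hi (fun hir => hirI (((subset_rejStep I cu1 cu2 N1) a r).trans h hir))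
        (h.trans ((subset_insert i rI).trans hrIR))
  have hxl : x ∉ o₁.filter p := fun h => hxo₁ (List.mem_filter.1 h).1
  rw [srrRej_eq_foldr, hsplit, List.foldr_append, List.foldr_cons, hlow,
    hdec.rejStep_eq hR hi hirI ((rejStep_subset_insert I cu1 cu2 N1 i rI).trans hrIR),
    mem_foldr_iff_of_notMem (subset_rejStep I' cu1 cu2 N1) (rejStep_subset_insert I' cu1 cu2 N1)
      hxl, hRf, mem_foldr_iff_of_notMem (subset_rejStep I cu1 cu2 N1)
      (rejStep_subset_insert I cu1 cu2 N1) hxl]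

theorem card_filter_srrRej_lt_eq (hdec : PrioDecreases I I' i) (hb : IsBaseline order)
    (hi : i ∈ srrRej I cu1 cu2 order N1) :
    #((srrRej I' cu1 cu2 order N1).filter fun x => order.idxOf x < order.idxOf i) =
      #((srrRej I cu1 cu2 order N1).filter fun x => order.idxOf x < order.idxOf i) := by
  have hcard : #(srrRej I' cu1 cu2 order N1) = #(srrRej I cu1 cu2 order N1) := by
    have h0 := hdec.msR_empty_eq (msR_srrRej I cu1 cu2 order N1) hi
    have h := msR_add_card_srrRej I cu1 cu2 hb.2 (N1 := N1)
    have h' := msR_add_card_srrRej I' cu1 cu2 hb.2 (N1 := N1)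
    omega
  have hhigh : (srrRej I' cu1 cu2 order N1).filter (fun x => ¬ order.idxOf x < order.idxOf i) =
      (srrRej I cu1 cu2 order N1).filter fun x => ¬ order.idxOf x < order.idxOf i := by
    ext x
    simp only [mem_filter, not_lt]
    exact and_congr_left (hdec.mem_srrRej_iff hb.1 hi)
  have h := card_filter_add_card_filter_not (s := srrRej I cu1 cu2 order N1)
    (p := fun x => order.idxOf x < order.idxOf i)
  have h' := card_filter_add_card_filter_not (s := srrRej I' cu1 cu2 order N1)
    (p := fun x => order.idxOf x < order.idxOf i)
  rw [hhigh] at h'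
  omega

end PrioDecreases

theorem srr_weakly_non_bossy_general (I I' : Inst N C) (cu1 cu2 : C) (order : List N) (i : N)
    (μ μ' : N → Option C) (hb : IsBaseline order)
    (hdec : PrioDecreases I I' i)
    (hout : IsSRROutcome I cu1 cu2 order μ) (hout' : IsSRROutcome I' cu1 cu2 order μ')
    (hunmatched : μ i = none) :
    ∀ j : N, order.idxOf i < order.idxOf j → (μ j ≠ none ↔ μ' j ≠ none) := by
  intro j hij
  have hi := (hout.ne_none_iff hb.2 i).not.1 (not_not.2 hunmatched)
  simp only [not_or, not_not, not_lt] at hi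
  obtain ⟨-, hiR, hquota⟩ := hi
  have hmono (R : Finset N) : #(R.filter fun x => order.idxOf x < order.idxOf i) ≤
      #(R.filter fun x => order.idxOf x < order.idxOf j) :=
    card_le_card (monotone_filter_right R fun _ _ hx => hx.trans hij)
  have hsame := hdec.card_filter_srrRej_lt_eq hb hiR
  have hI := hmono (srrRej I cu1 cu2 order (srrN1 I cu1 cu2 order))
  have hI' := hmono (srrRej I' cu1 cu2 order (srrN1 I cu1 cu2 order))
  rw [hout.ne_none_iff hb.2, hout'.ne_none_iff hb.2, hdec.srrN1_eq hiR,
    hdec.mem_srrRej_iff hb.1 hiR hij.le, ← hdec.1]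
  exact or_congr_right (or_congr_right (iff_of_false (by omega) (by omega)))

/-- The SRR rule is weakly non-bossy: if agent `i`'s priority (for the
preferential categories) decreases from `I` to `I'`, where in both instances the priorities
of `c_u^1` and `c_u^2` equal the same baseline ordering and all agents are eligible for
them, and `i` is unmatched under the SRR rule at `I`, then every agent `j` with `i ≻_π j`
is matched under the SRR rule at `I` iff she is matched under the SRR rule at `I'`. -/
theorem srr_weakly_non_bossy (I I' : Inst N C) (cu1 cu2 : C) (order : List N) (i : N)
    (μ μ' : N → Option C) (hne : cu1 ≠ cu2) (hb : IsBaseline order)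
    (h1E : ∀ j : N, I.Eligible j cu1) (h2E : ∀ j : N, I.Eligible j cu2)
    (h1E' : ∀ j : N, I'.Eligible j cu1) (h2E' : ∀ j : N, I'.Eligible j cu2)
    (h1P : ∀ j k : N, I.Strict cu1 (some j) (some k) ↔ order.idxOf j < order.idxOf k)
    (h2P : ∀ j k : N, I.Strict cu2 (some j) (some k) ↔ order.idxOf j < order.idxOf k)
    (h1P' : ∀ j k : N, I'.Strict cu1 (some j) (some k) ↔ order.idxOf j < order.idxOf k)
    (h2P' : ∀ j k : N, I'.Strict cu2 (some j) (some k) ↔ order.idxOf j < order.idxOf k)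
    (hdec : PrioDecreases I I' i)
    (hout : IsSRROutcome I cu1 cu2 order μ) (hout' : IsSRROutcome I' cu1 cu2 order μ')
    (hunmatched : μ i = none) :
    ∀ j : N, order.idxOf i < order.idxOf j → (μ j ≠ none ↔ μ' j ≠ none) :=
  srr_weakly_non_bossy_general I I' cu1 cu2 order i μ μ' hb hdec hout hout' hunmatched
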